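/- arXiv:2510.23120 — 3 statements merged into one kernel-verified Lean document; each statement's English description precedes it below -/
import Mathlib

section
/- For a positive integer p, the set W(p) of matrices of the form (μ_{i,j}(c))_{0 ≤ i,j < p}, where c = (c_1, ..., c_{p-1}) ∈ ℂ^{p-1} with c_1 ≠ 0, is a subgroup of GL(p, ℂ): for any such parameters a, b with a_1, b_1 ≠ 0 there exists c with c_1 ≠ 0 such that μ(a)·μ(b) = μ(c), the identity matrix equals μ(e) with e = (1,0,...,0), and every μ(c) is invertible with inverse in W(p). -/
/-- The truncated generating polynomial `c₁ T + ⋯ + c_{p-1} T^{p-1}`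
(as a power series whose coefficients vanish in degrees `0` and `≥ p`). -/
noncomputable def Mtr (p : ℕ) (c : ℕ → ℂ) : PowerSeries ℂ :=
  PowerSeries.mk fun k => if k = 0 ∨ p ≤ k then 0 else c k

/-- The `p × p` matrix `μ(c) = (μ_{i,j}(c))_{0 ≤ i,j < p}`, where `μ_{i,j}(c)` is the
coefficient of `T^j` in `(c₁ T + ⋯ + c_{p-1} T^{p-1})^i`. -/
noncomputable def muMat (p : ℕ) (c : ℕ → ℂ) : Matrix (Fin p) (Fin p) ℂ :=
  fun i j => PowerSeries.coeff (R := ℂ) (j : ℕ) (Mtr p c ^ (i : ℕ))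

/-!
For `f = c₁ T + ⋯ + c_{p-1} T^{p-1}`, row `i` of `μ(c)` lists the coefficients of `f^i` modulo
`T^p`, so `μ(c)` is the matrix of the substitution `T ↦ f` on `ℂ[T]/(T^p)`. Consequently
`μ(a) μ(b) = μ(f_a ∘ f_b)`, `μ(e) = μ(T) = 1`, and the coefficient of `T` in a composite is
the product of the coefficients of `T`. For inverses: `μ(a)` is upper triangular with diagonal
entries `a₁^i`, hence invertible, and the polynomial `g` whose coefficients form row `1` of
`μ(a)⁻¹` satisfies `g ∘ f_a ≡ T` modulo `T^p`, so that `μ(g) μ(a) = μ(T) = 1`.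
-/

open Finset

namespace Polynomial

variable {R : Type*} [CommRing R]

theorem coeff_pow_eq_zero_of_lt {g : R[X]} (hg : g.coeff 0 = 0) {j k : ℕ} (h : j < k) :
    (g ^ k).coeff j = 0 :=
  X_pow_dvd_iff.mp (pow_dvd_pow_of_dvd (X_dvd_iff.mpr hg) k) j h

theorem coeff_pow_self_of_coeff_zero {g : R[X]} (hg : g.coeff 0 = 0) (k : ℕ) :
    (g ^ k).coeff k = g.coeff 1 ^ k := by
  obtain ⟨q, rfl⟩ := X_dvd_iff.mpr hg
  rw [mul_pow, coeff_X_pow_mul', if_pos le_rfl, Nat.sub_self, coeff_zero_eq_eval_zero, eval_pow,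
    ← coeff_zero_eq_eval_zero]
  simp

theorem coeff_comp_eq_sum_range {f g : R[X]} (hg : g.coeff 0 = 0) {j n : ℕ} (hj : j < n) :
    (f.comp g).coeff j = ∑ k ∈ range n, f.coeff k * (g ^ k).coeff j := by
  rw [comp_eq_sum_left, sum_def, finsetSum_coeff]
  simp only [coeff_C_mul]
  calc ∑ k ∈ f.support, f.coeff k * (g ^ k).coeff j
      = ∑ k ∈ f.support ∪ range n, f.coeff k * (g ^ k).coeff j :=
        sum_subset subset_union_left fun k _ hk => by rw [notMem_support_iff.mp hk, zero_mul]
    _ = ∑ k ∈ range n, f.coeff k * (g ^ k).coeff j :=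
        (sum_subset subset_union_right fun k _ hk => by
          rw [coeff_pow_eq_zero_of_lt hg (by simp at hk; omega), mul_zero]).symm

theorem coeff_zero_comp {f g : R[X]} (hg : g.coeff 0 = 0) : (f.comp g).coeff 0 = f.coeff 0 := by
  rw [coeff_zero_eq_eval_zero, eval_comp, ← coeff_zero_eq_eval_zero, hg,
    ← coeff_zero_eq_eval_zero]

theorem coeff_one_comp {f g : R[X]} (hg : g.coeff 0 = 0) :
    (f.comp g).coeff 1 = f.coeff 1 * g.coeff 1 := by
  rw [coeff_comp_eq_sum_range hg Nat.one_lt_two]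
  simp [sum_range_succ, coeff_one]

noncomputable def powCoeffMatrix (n : ℕ) (f : R[X]) : Matrix (Fin n) (Fin n) R :=
  Matrix.of fun i j => (f ^ (i : ℕ)).coeff j

@[simp]
theorem powCoeffMatrix_apply (n : ℕ) (f : R[X]) (i j : Fin n) :
    powCoeffMatrix n f i j = (f ^ (i : ℕ)).coeff j :=
  rfl

theorem powCoeffMatrix_eq_of_X_pow_dvd_sub {n : ℕ} {f g : R[X]} (h : X ^ n ∣ f - g) :
    powCoeffMatrix n f = powCoeffMatrix n g := by
  ext i j
  have := X_pow_dvd_iff.mp (h.trans (sub_dvd_pow_sub_pow f g i)) j j.isLt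
  rwa [coeff_sub, sub_eq_zero] at this

theorem powCoeffMatrix_X (n : ℕ) : powCoeffMatrix n (X : R[X]) = 1 := by
  ext i j
  simp [coeff_X_pow, Matrix.one_apply, Fin.ext_iff, eq_comm]

theorem powCoeffMatrix_mul (n : ℕ) (f : R[X]) {g : R[X]} (hg : g.coeff 0 = 0) :
    powCoeffMatrix n f * powCoeffMatrix n g = powCoeffMatrix n (f.comp g) := by
  ext i j
  rw [Matrix.mul_apply, powCoeffMatrix_apply, ← pow_comp, coeff_comp_eq_sum_range hg j.isLt,
    ← Fin.sum_univ_eq_sum_range (fun k => (f ^ (i : ℕ)).coeff k * (g ^ k).coeff j)]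
  rfl

theorem powCoeffMatrix_isUpperTriangular (n : ℕ) {f : R[X]} (hf : f.coeff 0 = 0) :
    (powCoeffMatrix n f).IsUpperTriangular :=
  fun _ _ hij => coeff_pow_eq_zero_of_lt hf hij

theorem isUnit_det_powCoeffMatrix (n : ℕ) {f : R[X]} (hf0 : f.coeff 0 = 0)
    (hf1 : IsUnit (f.coeff 1)) : IsUnit (powCoeffMatrix n f).det := by
  rw [Matrix.det_of_isUpperTriangular (powCoeffMatrix_isUpperTriangular n hf0),
    IsUnit.prod_univ_iff]
  intro i
  rw [powCoeffMatrix_apply, coeff_pow_self_of_coeff_zero hf0]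
  exact hf1.pow _

theorem exists_X_pow_dvd_comp_sub_X {f : R[X]} (hf0 : f.coeff 0 = 0) (hf1 : IsUnit (f.coeff 1))
    {n : ℕ} (hn : 1 < n) : ∃ g : R[X], X ^ n ∣ g.comp f - X := by
  classical
  set M := powCoeffMatrix n f
  let one : Fin n := ⟨1, hn⟩
  -- Row `1` of `powCoeffMatrix n g` lists the coefficients of `g`: make it row `1` of `M⁻¹`.
  let g := ofFn n (M⁻¹ one)
  have hrow : (powCoeffMatrix n g * M) one = (M⁻¹ * M) one := by
    ext k
    simp [Matrix.mul_apply, g, one]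
  rw [powCoeffMatrix_mul n g hf0, Matrix.nonsing_inv_mul _ (isUnit_det_powCoeffMatrix n hf0 hf1),
    ← powCoeffMatrix_X n] at hrow
  refine ⟨g, X_pow_dvd_iff.mpr fun d hd => ?_⟩
  simpa [one, sub_eq_zero] using congrFun hrow ⟨d, hd⟩

end Polynomial

open Polynomial

noncomputable def muPoly (n : ℕ) (c : ℕ → ℂ) : ℂ[X] :=
  ∑ k ∈ Ico 1 n, C (c k) * X ^ k

theorem coeff_muPoly (n : ℕ) (c : ℕ → ℂ) (k : ℕ) :
    (muPoly n c).coeff k = if 1 ≤ k ∧ k < n then c k else 0 := by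
  simp [muPoly, finsetSum_coeff, coeff_C_mul, coeff_X_pow]

theorem coe_muPoly (p : ℕ) (c : ℕ → ℂ) : (muPoly p c : PowerSeries ℂ) = Mtr p c := by
  ext k
  rw [coeff_coe, coeff_muPoly, Mtr, PowerSeries.coeff_mk]
  split_ifs <;> first | rfl | omega

theorem muMat_eq_powCoeffMatrix {p n : ℕ} (hpn : p ≤ n) (c : ℕ → ℂ) :
    muMat p c = powCoeffMatrix p (muPoly n c) := by
  have hdvd : X ^ p ∣ muPoly p c - muPoly n c := X_pow_dvd_iff.mpr fun d hd => by
    rw [coeff_sub, coeff_muPoly, coeff_muPoly, sub_eq_zero]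
    split_ifs <;> first | rfl | omega
  rw [← powCoeffMatrix_eq_of_X_pow_dvd_sub hdvd]
  ext i j
  rw [powCoeffMatrix_apply, ← coeff_coe, Polynomial.coe_pow, coe_muPoly]
  rfl

theorem muMat_coeff_eq_powCoeffMatrix (p : ℕ) {g : ℂ[X]} (hg : g.coeff 0 = 0) :
    muMat p g.coeff = powCoeffMatrix p g := by
  rw [muMat_eq_powCoeffMatrix le_rfl]
  refine powCoeffMatrix_eq_of_X_pow_dvd_sub (X_pow_dvd_iff.mpr fun d hd => ?_)
  rw [coeff_sub, coeff_muPoly, sub_eq_zero]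
  rcases d with _ | d
  · simp [hg]
  · simp [hd]

theorem coeff_zero_muPoly (n : ℕ) (c : ℕ → ℂ) : (muPoly n c).coeff 0 = 0 := by
  simp [coeff_muPoly]

theorem coeff_one_muPoly {n : ℕ} (hn : 1 < n) (c : ℕ → ℂ) : (muPoly n c).coeff 1 = c 1 := by
  simp [coeff_muPoly, hn]

/- Below, `μ(c)` is represented by `muPoly (p + 2) c` rather than `muPoly p c`, which keeps
`c 1` visible also when `p ≤ 1`. -/

theorem exists_muMat_mul_eq_muMat (p : ℕ) (a b : ℕ → ℂ) :
    ∃ c : ℕ → ℂ, c 1 = a 1 * b 1 ∧ muMat p a * muMat p b = muMat p c := by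
  set P := muPoly (p + 2)
  have hb0 : (P b).coeff 0 = 0 := coeff_zero_muPoly _ b
  refine ⟨((P a).comp (P b)).coeff, ?_, ?_⟩
  · rw [coeff_one_comp hb0, coeff_one_muPoly (by omega), coeff_one_muPoly (by omega)]
  · rw [muMat_eq_powCoeffMatrix (Nat.le_add_right p 2) a,
      muMat_eq_powCoeffMatrix (Nat.le_add_right p 2) b, powCoeffMatrix_mul p _ hb0,
      muMat_coeff_eq_powCoeffMatrix p]
    rw [coeff_zero_comp hb0, coeff_zero_muPoly]

theorem exists_muMat_mul_eq_one (p : ℕ) {a : ℕ → ℂ} (ha : a 1 ≠ 0) :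
    ∃ c : ℕ → ℂ, c 1 ≠ 0 ∧ muMat p c * muMat p a = 1 := by
  set f := muPoly (p + 2) a
  have hf0 : f.coeff 0 = 0 := coeff_zero_muPoly _ a
  have hf1 : f.coeff 1 = a 1 := coeff_one_muPoly (by omega) a
  obtain ⟨g, hg⟩ := exists_X_pow_dvd_comp_sub_X hf0 (hf1 ▸ ha.isUnit) (by omega : 1 < p + 2)
  have hgf (d : ℕ) (hd : d < p + 2) : (g.comp f).coeff d = (X : ℂ[X]).coeff d := by
    rw [← sub_eq_zero, ← coeff_sub]
    exact X_pow_dvd_iff.mp hg d hd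
  have hg0 : g.coeff 0 = 0 := by rw [← coeff_zero_comp hf0, hgf 0 (by omega), coeff_X_zero]
  have hg1 : g.coeff 1 * a 1 = 1 := by
    rw [← hf1, ← coeff_one_comp hf0, hgf 1 (by omega), coeff_X_one]
  refine ⟨g.coeff, left_ne_zero_of_mul_eq_one hg1, ?_⟩
  rw [muMat_coeff_eq_powCoeffMatrix p hg0, muMat_eq_powCoeffMatrix (Nat.le_add_right p 2),
    powCoeffMatrix_mul p _ hf0, ← powCoeffMatrix_X p]
  exact powCoeffMatrix_eq_of_X_pow_dvd_sub ((pow_dvd_pow X (by omega)).trans hg)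

theorem muMat_group_general (p : ℕ) :
    (∀ a b : ℕ → ℂ, a 1 ≠ 0 → b 1 ≠ 0 →
      ∃ c : ℕ → ℂ, c 1 ≠ 0 ∧ muMat p a * muMat p b = muMat p c) ∧
    (muMat p (fun k => if k = 1 then 1 else 0) = 1) ∧
    (∀ a : ℕ → ℂ, a 1 ≠ 0 →
      ∃ c : ℕ → ℂ, c 1 ≠ 0 ∧ muMat p a * muMat p c = 1 ∧ muMat p c * muMat p a = 1) := by
  refine ⟨fun a b ha hb => ?_, ?_, fun a ha => ?_⟩
  · obtain ⟨c, hc1, hc⟩ := exists_muMat_mul_eq_muMat p a b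
    exact ⟨c, hc1 ▸ mul_ne_zero ha hb, hc⟩
  · have he : (fun k => if k = 1 then (1 : ℂ) else 0) = (X : ℂ[X]).coeff := by
      ext k
      exact (coeff_X.trans (if_congr eq_comm rfl rfl)).symm
    rw [he, muMat_coeff_eq_powCoeffMatrix p coeff_X_zero, powCoeffMatrix_X]
  · obtain ⟨c, hc1, hc⟩ := exists_muMat_mul_eq_one p ha
    exact ⟨c, hc1, mul_eq_one_comm.mp hc, hc⟩

/-- the set `W(p)` of matrices `μ(c)` with `c₁ ≠ 0` is a subgroup of
`GL(p, ℂ)`: it is closed under multiplication, contains the identity (`= μ(e)` with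
`e = (1,0,…,0)`), and every `μ(c)` is invertible with inverse in `W(p)`. -/
theorem muMat_group (p : ℕ) (hp : 0 < p) :
    (∀ a b : ℕ → ℂ, a 1 ≠ 0 → b 1 ≠ 0 →
      ∃ c : ℕ → ℂ, c 1 ≠ 0 ∧ muMat p a * muMat p b = muMat p c) ∧
    (muMat p (fun k => if k = 1 then 1 else 0) = 1) ∧
    (∀ a : ℕ → ℂ, a 1 ≠ 0 →
      ∃ c : ℕ → ℂ, c 1 ≠ 0 ∧ muMat p a * muMat p c = 1 ∧ muMat p c * muMat p a = 1) :=
  muMat_group_general p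
end

section
/- Let Y ∈ GL(n,ℂ) normalize the group J_1(n) of invertible upper-triangular Toeplitz matrices, and suppose the 0-th row of Y is (1, 0, ..., 0). Then there exists c = (c_1,...,c_{n-1}) ∈ ℂ^{n-1} with c_1 ≠ 0 such that Y = (μ_{i,j}(c))_{0≤i,j<n}. -/
/-!
Upper-triangular Toeplitz matrices are the truncations `φ f` of power series `f`, and
`φ = toeplitz n` is an algebra map sending `X` to the shift `Λ`. Conjugation by `Y` maps the
finite-dimensional algebra of such matrices into, hence onto, itself, so `Y φ(f) = Λ Y` for some
`f`. Reading row `0` of `Λ^i Y = Y φ(f^i)` gives `Y i j = coeff j (f^i)`. Since `φ(f^k)` is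
conjugate to `Λ^k`, `X^n ∣ f^k ↔ n ≤ k`: for `k = n` this gives `f(0) = 0`, for `k = n - 1` it
gives `coeff 1 f ≠ 0`.
-/

/-- `J_1(n) ⊂ GL(n,ℂ)`: invertible upper-triangular Toeplitz matrices
`Σ_{0≤k<n} a_k Λ^k` with `a₀ ≠ 0`. -/
def J1set (n : ℕ) : Set (Matrix (Fin n) (Fin n) ℂ) :=
  {M | ∃ a : ℕ → ℂ, a 0 ≠ 0 ∧
    ∀ i j : Fin n, M i j = if (i : ℕ) ≤ (j : ℕ) then a ((j : ℕ) - (i : ℕ)) else 0}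

open PowerSeries

theorem PowerSeries.coeff_mul_eq_sum_coeff_mul_coeff_X_pow_mul {R : Type*} [CommSemiring R]
    (f g : R⟦X⟧) {j n : ℕ} (hj : j < n) :
    coeff j (f * g) = ∑ k : Fin n, coeff k f * coeff j (X ^ (k : ℕ) * g) := by
  have hvanish : ∀ k ∈ Finset.range n, k ∉ Finset.range (j + 1) →
      coeff k f * coeff j (X ^ k * g) = 0 := by
    intro k _ hk
    rw [coeff_X_pow_mul', if_neg (by simpa using hk), mul_zero]
  rw [Fin.sum_univ_eq_sum_range (fun k => coeff k f * coeff j (X ^ k * g)),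
    ← Finset.sum_subset (by simpa using hj) hvanish, coeff_mul,
    Finset.Nat.sum_antidiagonal_eq_sum_range_succ (fun a b => coeff a f * coeff b g)]
  refine Finset.sum_congr rfl fun k hk => ?_
  rw [coeff_X_pow_mul', if_pos (by simpa [Nat.lt_succ_iff] using hk)]

noncomputable section Toeplitz

variable {R : Type*} [CommSemiring R] (n : ℕ)

def toeplitzLinearMap : R⟦X⟧ →ₗ[R] Matrix (Fin n) (Fin n) R where
  toFun f := Matrix.of fun i j => coeff (j : ℕ) (X ^ (i : ℕ) * f)
  map_add' f g := by ext; simp [mul_add]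
  map_smul' r f := by ext; simp

/-- `toeplitz n f = Σ_{k<n} coeff k f • Λ^k`, whose `(i, j)` entry is `coeff (j - i) f` for
`i ≤ j`. -/
def toeplitz : R⟦X⟧ →ₐ[R] Matrix (Fin n) (Fin n) R :=
  AlgHom.ofLinearMap (toeplitzLinearMap n)
    (by ext i j; simp [toeplitzLinearMap, coeff_X_pow, Matrix.one_apply, eq_comm, Fin.val_inj])
    (fun f g => by
      ext i j
      simp only [toeplitzLinearMap, LinearMap.coe_mk, AddHom.coe_mk, Matrix.mul_apply,
        Matrix.of_apply, ← mul_assoc]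
      exact coeff_mul_eq_sum_coeff_mul_coeff_X_pow_mul _ _ j.isLt)

variable {n}

@[simp]
theorem toeplitz_apply (f : R⟦X⟧) (i j : Fin n) :
    toeplitz n f i j = coeff (j : ℕ) (X ^ (i : ℕ) * f) :=
  rfl

theorem toeplitz_eq_zero_iff {f : R⟦X⟧} : toeplitz n f = 0 ↔ X ^ n ∣ f := by
  refine ⟨fun h => X_pow_dvd_iff.2 fun d hd => ?_, fun h => ?_⟩
  · simpa using congr_fun₂ h ⟨0, by omega⟩ ⟨d, hd⟩
  · ext i j
    exact X_pow_dvd_iff.1 (h.mul_left _) j j.isLt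

theorem toeplitz_X_pow_mul_apply_zero (hn : 0 < n) (k : Fin n) (M : Matrix (Fin n) (Fin n) R)
    (j : Fin n) : (toeplitz n (X ^ (k : ℕ) : R⟦X⟧) * M) ⟨0, hn⟩ j = M k j := by
  simp only [Matrix.mul_apply, toeplitz_apply, pow_zero, one_mul, coeff_X_pow, Fin.val_inj,
    ite_mul, zero_mul, Finset.sum_ite_eq', Finset.mem_univ, if_true]

end Toeplitz

theorem PowerSeries.X_pow_dvd_X_pow_iff {R : Type*} [CommSemiring R] [Nontrivial R] {n k : ℕ} :
    (X : R⟦X⟧) ^ n ∣ X ^ k ↔ n ≤ k := by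
  rw [X_pow_dvd_iff]
  refine ⟨fun h => ?_, fun h d hd => by rw [coeff_X_pow, if_neg (by omega)]⟩
  by_contra! hk
  simpa using h k hk

theorem PowerSeries.constantCoeff_eq_zero_of_X_pow_dvd_pow {R : Type*} [CommSemiring R]
    [IsReduced R] {f : R⟦X⟧} {n : ℕ} (h : X ^ n ∣ f ^ n) (hn : 0 < n) : constantCoeff f = 0 :=
  IsNilpotent.eq_zero ⟨n, by simpa using X_pow_dvd_iff.1 h 0 hn⟩

theorem PowerSeries.coeff_one_ne_zero_of_not_X_pow_dvd_pow {R : Type*} [CommSemiring R]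
    {f : R⟦X⟧} {n : ℕ} (hn : 2 ≤ n) (h0 : constantCoeff f = 0) (h : ¬ X ^ n ∣ f ^ (n - 1)) :
    coeff 1 f ≠ 0 := by
  intro h1
  have hX2 : X ^ 2 ∣ f := X_pow_dvd_iff.2 fun d hd => by
    interval_cases d
    exacts [by simpa using h0, h1]
  refine h ((pow_dvd_pow X (by omega : n ≤ 2 * (n - 1))).trans ?_)
  rw [pow_mul]
  exact pow_dvd_pow_of_dvd hX2 _

theorem PowerSeries.coeff_pow_eq_of_X_pow_dvd_sub {R : Type*} [CommRing R] {f g : R⟦X⟧} {n j : ℕ}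
    (h : X ^ n ∣ f - g) (hj : j < n) (i : ℕ) : coeff j (f ^ i) = coeff j (g ^ i) :=
  sub_eq_zero.1 <| by
    rw [← map_sub]
    exact X_pow_dvd_iff.1 (h.trans (sub_dvd_pow_sub_pow f g i)) j hj

theorem apply_eq_coeff_pow_of_semiconjBy {R : Type*} [CommSemiring R] {n : ℕ} (hn : 0 < n)
    {Y : Matrix (Fin n) (Fin n) R} (hrow : ∀ j, Y ⟨0, hn⟩ j = if j = ⟨0, hn⟩ then 1 else 0)
    {f : R⟦X⟧} (hf : SemiconjBy Y (toeplitz n f) (toeplitz n X)) (i j : Fin n) :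
    Y i j = coeff j (f ^ (i : ℕ)) :=
  calc Y i j = (toeplitz n (X ^ (i : ℕ) : R⟦X⟧) * Y) ⟨0, hn⟩ j :=
        (toeplitz_X_pow_mul_apply_zero hn i Y j).symm
    _ = (Y * toeplitz n (f ^ (i : ℕ))) ⟨0, hn⟩ j := by rw [map_pow, map_pow, (hf.pow_right i).eq]
    _ = coeff j (f ^ (i : ℕ)) := by simp [Matrix.mul_apply, hrow, -map_pow]

theorem X_pow_dvd_pow_iff_of_semiconjBy {R : Type*} [CommSemiring R] [Nontrivial R] {n : ℕ}
    {Y : (Matrix (Fin n) (Fin n) R)ˣ} {f : R⟦X⟧}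
    (hf : SemiconjBy (Y : Matrix (Fin n) (Fin n) R) (toeplitz n f) (toeplitz n X)) (k : ℕ) :
    X ^ n ∣ f ^ k ↔ n ≤ k := by
  rw [← toeplitz_eq_zero_iff, ← X_pow_dvd_X_pow_iff (R := R), ← toeplitz_eq_zero_iff, map_pow,
    map_pow, ← Units.mul_right_eq_zero Y, (hf.pow_right k).eq, Units.mul_left_eq_zero]

theorem mem_J1set_iff {n : ℕ} {M : Matrix (Fin n) (Fin n) ℂ} :
    M ∈ J1set n ↔ ∃ f : ℂ⟦X⟧, constantCoeff f ≠ 0 ∧ toeplitz n f = M := by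
  constructor
  · rintro ⟨a, ha, hM⟩
    exact ⟨mk a, by simpa using ha, by ext i j; simp [hM, coeff_X_pow_mul']⟩
  · rintro ⟨f, hf, rfl⟩
    exact ⟨fun k => coeff k f, by simpa using hf, fun i j => by simp [coeff_X_pow_mul']⟩

section Normalizer

variable {n : ℕ} {Y : (Matrix (Fin n) (Fin n) ℂ)ˣ}

theorem exists_toeplitz_eq_conj_toeplitz
    (hY : ∀ A ∈ J1set n, (Y * A * (Y⁻¹ : _ˣ) : Matrix (Fin n) (Fin n) ℂ) ∈ J1set n)
    (f : ℂ⟦X⟧) : ∃ g : ℂ⟦X⟧,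
      toeplitz n g = (Y : Matrix (Fin n) (Fin n) ℂ) * toeplitz n f * (Y⁻¹ : _ˣ) := by
  by_cases hf : constantCoeff f = 0
  · -- `f + 1` has invertible constant term and conjugation fixes `1`
    obtain ⟨g, -, hg⟩ := mem_J1set_iff.1 (hY _ (mem_J1set_iff.2 ⟨f + 1, by simp [hf], rfl⟩))
    refine ⟨g - 1, ?_⟩
    rw [map_sub, hg, map_add, map_one, mul_add, add_mul, mul_one, Units.mul_inv,
      add_sub_cancel_right]
  · obtain ⟨g, -, hg⟩ := mem_J1set_iff.1 (hY _ (mem_J1set_iff.2 ⟨f, hf, rfl⟩))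
    exact ⟨g, hg⟩

theorem exists_semiconjBy_toeplitz
    (hY : ∀ A ∈ J1set n, (Y * A * (Y⁻¹ : _ˣ) : Matrix (Fin n) (Fin n) ℂ) ∈ J1set n)
    (g : ℂ⟦X⟧) : ∃ f, SemiconjBy (Y : Matrix (Fin n) (Fin n) ℂ) (toeplitz n f) (toeplitz n g) := by
  let S := LinearMap.range (toeplitz n : ℂ⟦X⟧ →ₐ[ℂ] _).toLinearMap
  let e := (MulSemiringAction.toAlgEquiv ℂ (Matrix (Fin n) (Fin n) ℂ)
    (ConjAct.toConjAct Y)).toLinearEquiv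
  have he (M) : e M = (Y : Matrix (Fin n) (Fin n) ℂ) * M * (Y⁻¹ : _ˣ) := ConjAct.units_smul_def _ _
  have hle : S.map e.toLinearMap ≤ S := by
    rintro _ ⟨_, ⟨f, rfl⟩, rfl⟩
    obtain ⟨g, hg⟩ := exists_toeplitz_eq_conj_toeplitz hY f
    exact ⟨g, by simp [he, hg]⟩
  obtain ⟨_, ⟨f, rfl⟩, hf⟩ : toeplitz n g ∈ S.map e.toLinearMap := by
    rw [Submodule.eq_of_le_of_finrank_le hle (e.finrank_map_eq S).ge]
    exact ⟨g, rfl⟩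
  rw [LinearEquiv.coe_coe, AlgHom.toLinearMap_apply, he] at hf
  exact ⟨f, ((Units.eq_mul_inv_iff_mul_eq Y).1 hf.symm).symm⟩

end Normalizer

/-- if `Y ∈ GL(n,ℂ)` normalizes `J_1(n)` and the `0`-th row of `Y` is
`(1,0,…,0)`, then there is `c = (c₁,…,c_{n-1})` with `c₁ ≠ 0` such that
`Y = (μ_{i,j}(c))_{0≤i,j<n}`, where `μ_{i,j}(c)` is the coefficient of `T^j` in
`(c₁T + ⋯ + c_{n-1}T^{n-1})^i`. -/
theorem normalizer_toeplitz_mu (n : ℕ) (hn : 0 < n) (Y : (Matrix (Fin n) (Fin n) ℂ)ˣ)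
    (hY : ∀ A ∈ J1set n,
      ((Y : Matrix (Fin n) (Fin n) ℂ) * A * ((Y⁻¹ : _ˣ) : Matrix (Fin n) (Fin n) ℂ)) ∈ J1set n)
    (hrow : ∀ j : Fin n,
      (Y : Matrix (Fin n) (Fin n) ℂ) ⟨0, hn⟩ j = if j = ⟨0, hn⟩ then 1 else 0) :
    ∃ c : ℕ → ℂ, c 1 ≠ 0 ∧ ∀ i j : Fin n,
      (Y : Matrix (Fin n) (Fin n) ℂ) i j =
        PowerSeries.coeff (j : ℕ)
          ((PowerSeries.mk fun k => if k = 0 ∨ n ≤ k then 0 else c k : PowerSeries ℂ) ^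
            (i : ℕ)) := by
  obtain ⟨f, hf⟩ := exists_semiconjBy_toeplitz hY X
  have hdvd := X_pow_dvd_pow_iff_of_semiconjBy hf
  have h0 : constantCoeff f = 0 := constantCoeff_eq_zero_of_X_pow_dvd_pow ((hdvd n).2 le_rfl) hn
  refine ⟨fun k => if k < n then coeff k f else 1, ?_, fun i j => ?_⟩
  · dsimp only
    split_ifs with h1
    · exact coeff_one_ne_zero_of_not_X_pow_dvd_pow h1 h0 (by rw [hdvd]; omega)
    · exact one_ne_zero
  · rw [apply_eq_coeff_pow_of_semiconjBy hn hrow hf]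
    refine coeff_pow_eq_of_X_pow_dvd_sub (X_pow_dvd_iff.2 fun d hd => ?_) j.isLt i
    rcases eq_or_ne d 0 with rfl | hd0
    · simpa using h0
    · simp [hd0, hd.not_ge, hd]
end

section
/- For the group W(n) = {μ(c) = (μ_{i,j}(c))_{0≤i,j<n} : c ∈ ℂ^{n-1}, c_1 ≠ 0} ⊂ GL(n,ℂ) and any α = (α_0, α_1, ..., α_{n-1}) ∈ ℂ^n with α_{n-1} ≠ 0, there exists g ∈ W(n) such that α · g^T = (α_0, 0, ..., 0, 1). In particular, the W(n)-orbit of α under right multiplication by transposes contains (α_0, 0, ..., 0, 1), and the entry α_0 is invariant under this action. -/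
/-- The generating series `M(c,T) = c₁ T + c₂ T² + ⋯`. -/
noncomputable def Mgen (c : ℕ → ℂ) : PowerSeries ℂ :=
  PowerSeries.mk fun k => if k = 0 then 0 else c k

/-- `μ_{i,j}(c)` is the coefficient of `T^j` in `M(c,T)^i`. -/
noncomputable def mu (c : ℕ → ℂ) (i j : ℕ) : ℂ :=
  PowerSeries.coeff (R := ℂ) j (Mgen c ^ i)

/-!
Writing `M(c,T) = T · U(c,T)` (`U = MgenDivX c`, so `U(c,0) = c₁`), the row `i` of `μ(c)` is `T^i U^i`, so
`μ(c)` is upper triangular with diagonal `c₁^i`, and `μ_{i,j}(c)` only involves `c_k` for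
`k ≤ j - i + 1`. The last column entry `μ_{i,n-1}(c)` is the first to see `c_{n-i}`, and it
does so affinely, with slope `i c₁^{i-1}`. Hence, after fixing `c₁` by `α_{n-1} c₁^{n-1} = 1`,
row `i = n-2, n-3, …, 1` of `α · μ(c)ᵀ` can be made to vanish by choosing `c_{n-i}`, without
disturbing the rows already normalized.
-/

open PowerSeries

section PowerSeries

variable {R : Type*} [CommRing R]

theorem PowerSeries.coeff_pow_eq_of_coeff_eq {f g : R⟦X⟧} {j : ℕ}
    (h : ∀ k ≤ j, coeff k f = coeff k g) (i : ℕ) : coeff j (f ^ i) = coeff j (g ^ i) := by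
  have hfg : X ^ (j + 1) ∣ f - g :=
    X_pow_dvd_iff.mpr fun k hk => by rw [map_sub, h k (by omega), sub_self]
  have hpow := X_pow_dvd_iff.mp (hfg.trans (sub_dvd_pow_sub_pow f g i)) j j.lt_succ_self
  rwa [map_sub, sub_eq_zero] at hpow

theorem PowerSeries.coeff_add_C_mul_X_pow_pow (f : R⟦X⟧) {k : ℕ} (hk : k ≠ 0) (d : R) (i : ℕ) :
    coeff k ((f + C d * X ^ k) ^ i) =
      coeff k (f ^ i) + i * constantCoeff f ^ (i - 1) * d := by
  set Q := ∑ s ∈ Finset.range i, (f + C d * X ^ k) ^ s * f ^ (i - 1 - s)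
  -- Geometric sum: `(f + E)^i - f^i = Q * E`, and only the constant term of `Q` reaches `X^k`.
  have hdiff : (f + C d * X ^ k) ^ i - f ^ i = Q * C d * X ^ k := by
    rw [← geom_sum₂_mul, add_sub_cancel_left, mul_assoc]
  have hQ : constantCoeff Q = i * constantCoeff f ^ (i - 1) := by
    have hE : constantCoeff (C d * X ^ k : R⟦X⟧) = 0 := by simp [hk]
    simp only [Q, map_sum, map_mul, map_pow, map_add, hE, add_zero, ← pow_add]
    rw [Finset.sum_congr rfl fun s hs => by rw [Nat.add_sub_cancel' (by have := Finset.mem_range.mp hs; omega)]]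
    simp
  have hcoeff := congrArg (coeff k) hdiff
  have hshift := coeff_mul_X_pow (Q * C d) k 0
  rw [zero_add] at hshift
  rw [map_sub, hshift, coeff_mul_C, coeff_zero_eq_constantCoeff_apply, hQ] at hcoeff
  rw [← hcoeff, add_sub_cancel]

end PowerSeries

noncomputable def MgenDivX (c : ℕ → ℂ) : PowerSeries ℂ :=
  PowerSeries.mk fun k => c (k + 1)

theorem Mgen_eq_X_mul (c : ℕ → ℂ) : Mgen c = X * MgenDivX c := by
  ext k
  rcases k with _ | k <;> simp [Mgen, MgenDivX, coeff_succ_X_mul]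

theorem mu_eq_ite (c : ℕ → ℂ) (i j : ℕ) :
    mu c i j = if i ≤ j then coeff (j - i) (MgenDivX c ^ i) else 0 := by
  rw [mu, Mgen_eq_X_mul, mul_pow, coeff_X_pow_mul']

theorem mu_of_lt (c : ℕ → ℂ) {i j : ℕ} (h : j < i) : mu c i j = 0 := by
  rw [mu_eq_ite, if_neg (by omega)]

theorem mu_add_left (c : ℕ → ℂ) (i t : ℕ) : mu c i (i + t) = coeff t (MgenDivX c ^ i) := by
  rw [mu_eq_ite, if_pos (by omega), Nat.add_sub_cancel_left]

theorem mu_self (c : ℕ → ℂ) (i : ℕ) : mu c i i = c 1 ^ i := by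
  simpa [coeff_zero_eq_constantCoeff_apply, MgenDivX] using mu_add_left c i 0

theorem mu_update_of_lt (c : ℕ → ℂ) (x : ℂ) {i j m : ℕ} (h : j + 1 < i + m) :
    mu (Function.update c m x) i j = mu c i j := by
  rcases lt_or_ge j i with hji | hij
  · rw [mu_of_lt _ hji, mu_of_lt _ hji]
  obtain ⟨t, rfl⟩ := Nat.exists_eq_add_of_le hij
  rw [mu_add_left, mu_add_left]
  refine coeff_pow_eq_of_coeff_eq (fun k hk => ?_) i
  simp only [MgenDivX, coeff_mk]
  rw [Function.update_of_ne (by omega)]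

theorem mu_update_top (c : ℕ → ℂ) (x : ℂ) (i : ℕ) {k : ℕ} (hk : k ≠ 0) :
    mu (Function.update c (k + 1) x) i (i + k) =
      mu c i (i + k) + i * c 1 ^ (i - 1) * (x - c (k + 1)) := by
  have hU : MgenDivX (Function.update c (k + 1) x) = MgenDivX c + C (x - c (k + 1)) * X ^ k := by
    ext t
    simp only [MgenDivX, map_add, coeff_mk, coeff_C_mul_X_pow]
    by_cases ht : t = k
    · simp [ht]
    · simp [ht, Function.update_of_ne]
  rw [mu_add_left, mu_add_left, hU, coeff_add_C_mul_X_pow_pow _ hk]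
  simp [MgenDivX]

section RowSums

variable (α : ℕ → ℂ) (c : ℕ → ℂ)

theorem sum_mul_mu_zero {n : ℕ} (hn : 0 < n) :
    ∑ j ∈ Finset.range n, α j * mu c 0 j = α 0 := by
  simp [mu_eq_ite, Finset.sum_ite_eq', hn]

theorem sum_mul_mu_last (i : ℕ) :
    ∑ j ∈ Finset.range (i + 1), α j * mu c i j = α i * c 1 ^ i := by
  rw [Finset.sum_range_succ, mu_self, add_eq_right]
  exact Finset.sum_eq_zero fun j hj => by rw [mu_of_lt c (Finset.mem_range.mp hj), mul_zero]

theorem sum_mul_mu_update_of_lt (x : ℂ) {n i m : ℕ} (h : n < i + m) :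
    ∑ j ∈ Finset.range n, α j * mu (Function.update c m x) i j =
      ∑ j ∈ Finset.range n, α j * mu c i j :=
  Finset.sum_congr rfl fun j hj => by
    rw [mu_update_of_lt c x (by have := Finset.mem_range.mp hj; omega)]

theorem sum_mul_mu_update_top (x : ℂ) (i : ℕ) {k : ℕ} (hk : k ≠ 0) :
    ∑ j ∈ Finset.range (i + k + 1), α j * mu (Function.update c (k + 1) x) i j =
      ∑ j ∈ Finset.range (i + k + 1), α j * mu c i j +
        α (i + k) * (i * c 1 ^ (i - 1)) * (x - c (k + 1)) := by
  rw [Finset.sum_range_succ, Finset.sum_range_succ, mu_update_top c x i hk,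
    sum_mul_mu_update_of_lt α c x (by omega)]
  ring

theorem exists_normalizing_rows {n : ℕ} (hα : α (n - 1) ≠ 0) :
    ∀ m, 1 ≤ m → m < n → ∃ c : ℕ → ℂ, c 1 ≠ 0 ∧ ∀ i, 0 < i → n ≤ i + m → i < n →
      ∑ j ∈ Finset.range n, α j * mu c i j = if i = n - 1 then 1 else 0 := by
  intro m hm
  induction m, hm using Nat.le_induction with
  | base =>
    intro hn
    obtain ⟨z, hz⟩ := IsAlgClosed.exists_pow_nat_eq (α (n - 1))⁻¹ (show 0 < n - 1 by omega)
    refine ⟨fun _ => z, fun h0 => ?_, fun i _ hi hin => ?_⟩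
    · change z = 0 at h0
      rw [h0, zero_pow (by omega)] at hz
      exact inv_ne_zero hα hz.symm
    obtain rfl : i = n - 1 := by omega
    rw [show Finset.range n = Finset.range (n - 1 + 1) by congr 1; omega, sum_mul_mu_last, hz,
      mul_inv_cancel₀ hα, if_pos rfl]
  | succ m hm ih =>
    intro hmn
    obtain ⟨c, hc1, hrows⟩ := ih (by omega)
    obtain ⟨i₀, hn⟩ : ∃ i₀, n = i₀ + m + 1 := ⟨n - m - 1, by omega⟩
    set S := ∑ j ∈ Finset.range n, α j * mu c i₀ j
    set a := α (n - 1) * (i₀ * c 1 ^ (i₀ - 1))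
    have ha : a ≠ 0 := mul_ne_zero hα (mul_ne_zero (by norm_cast; omega) (pow_ne_zero _ hc1))
    set x := c (m + 1) - S / a
    refine ⟨Function.update c (m + 1) x, by rwa [Function.update_of_ne (by omega)],
      fun i hi hin hi' => ?_⟩
    obtain rfl | hlt : i = i₀ ∨ i₀ < i := by omega
    · rw [if_neg (by omega), hn, sum_mul_mu_update_top α c x i (by omega), ← hn,
        show i + m = n - 1 by omega]
      change S + a * (x - c (m + 1)) = 0
      rw [sub_sub_cancel_left, mul_neg, mul_div_cancel₀ _ ha, add_neg_cancel]
    · rw [sum_mul_mu_update_of_lt α c x (by omega)]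
      exact hrows i hi (by omega) hi'

end RowSums

/-- for any `α = (α₀,…,α_{n-1})` with `α_{n-1} ≠ 0` there exists
`g = μ(c) ∈ W(n)` (i.e. `c` with `c₁ ≠ 0`) such that `α · gᵀ = (α₀, 0, …, 0, 1)`,
where `(α · gᵀ)_i = Σ_j α_j μ_{i,j}(c)`; moreover the entry `α₀` is invariant under
this action. -/
theorem weyl_normalize_alpha (n : ℕ) (hn : 2 ≤ n) (α : ℕ → ℂ) (hα : α (n - 1) ≠ 0) :
    (∃ c : ℕ → ℂ, c 1 ≠ 0 ∧ ∀ i < n,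
      ∑ j ∈ Finset.range n, α j * mu c i j =
        if i = 0 then α 0 else if i = n - 1 then 1 else 0) ∧
    (∀ c : ℕ → ℂ, ∑ j ∈ Finset.range n, α j * mu c 0 j = α 0) := by
  obtain ⟨c, hc1, hrows⟩ := exists_normalizing_rows α hα (n - 1) (by omega) (by omega)
  refine ⟨⟨c, hc1, fun i hi => ?_⟩, fun c => sum_mul_mu_zero α c (by omega)⟩
  rcases Nat.eq_zero_or_pos i with rfl | hi0
  · exact (sum_mul_mu_zero α c (by omega)).trans (if_pos rfl).symm
  · rw [if_neg hi0.ne', hrows i hi0 (by omega) hi]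
end
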